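/- arXiv:1811.05036 — 2 statements merged into one kernel-verified Lean document; each statement's English description precedes it below -/
import Mathlib

section
/- For every finite generating set S of ℤ², the Cayley graph Cay(ℤ², S) is strongly shortcut; that is, there exist θ ∈ ℕ and ξ ∈ (0,1) such that every ξ-almost isometric cycle of Cay(ℤ², S) has length at most θ. -/
open scoped Classical

noncomputable section

namespace ShortcutGraphs

/-- Path metric on (the geometric realization of) the cycle graph `C` with `n` edges:
points of `C` are parametrized by `ℝ` modulo `n`, with each edge isometric to `[0,1]`. -/
def cdist (n : ℕ) (p q : ℝ) : ℝ := ⨅ k : ℤ, |p - q + k * (n : ℝ)|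

variable {V : Type*}

/-- A cycle of length `n` in the simplicial graph `G`: a nondegenerate combinatorial map
from the cycle graph with `n` edges, recorded by the images of its vertices `0, 1, …, n-1`
(indexed by `ZMod n`); consecutive vertices map to adjacent vertices of `G`. -/
def IsCycle (G : SimpleGraph V) (n : ℕ) (c : ZMod n → V) : Prop :=
  ∀ i : ZMod n, G.Adj (c i) (c (i + 1))

/-- Distance, in the geometric realization of the graph `G` (each edge isometric to `[0,1]`,
equipped with the path metric), between the images under the cycle `c` of the points of the
cycle graph parametrized by `p` and `q`.  The point parametrized by `p` lies on the edge of
the cycle joining vertex `⌊p⌋` to vertex `⌊p⌋ + 1`, at distance `p - ⌊p⌋` from the former; a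
geodesic between two points of a graph either stays within one closed edge (the `if` terms)
or consists of a piece of an edge, a geodesic between two vertices, and a piece of an edge
(the `route` term). -/
def rdist (G : SimpleGraph V) (n : ℕ) (c : ZMod n → V) (p q : ℝ) : ℝ :=
  let i : ZMod n := ((⌊p⌋ : ℤ) : ZMod n)
  let j : ZMod n := ((⌊q⌋ : ℤ) : ZMod n)
  let s : ℝ := Int.fract p
  let t : ℝ := Int.fract q
  let a : V := c i
  let b : V := c (i + 1)
  let u : V := c j
  let v : V := c (j + 1)
  let route : ℝ :=
    min (min (s + (G.dist a u : ℝ) + t) (s + (G.dist a v : ℝ) + (1 - t)))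
        (min ((1 - s) + (G.dist b u : ℝ) + t) ((1 - s) + (G.dist b v : ℝ) + (1 - t)))
  min route
    (min (if a = u ∧ b = v then |s - t| else route)
         (if a = v ∧ b = u then |s + t - 1| else route))

/-- Two points of the cycle graph with `n` edges are antipodal if their distance is `n/2`. -/
def Antipodal (n : ℕ) (p q : ℝ) : Prop := cdist n p q = (n : ℝ) / 2

/-- The cycle `c` is isometric: it is an isometric embedding at the level of all points of
the geometric realizations. -/
def IsIsometricCycle (G : SimpleGraph V) (n : ℕ) (c : ZMod n → V) : Prop :=
  ∀ p q : ℝ, rdist G n c p q = cdist n p q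

/-- The cycle `c` is `ξ`-almost isometric: `d_Γ(f(p), f(q)) ≥ ξ·|C|/2` for every antipodal
pair of points `p, q` of the cycle. -/
def IsAlmostIsometricCycle (G : SimpleGraph V) (n : ℕ) (c : ZMod n → V) (ξ : ℝ) : Prop :=
  ∀ p q : ℝ, Antipodal n p q → ξ * ((n : ℝ) / 2) ≤ rdist G n c p q

/-- A graph is shortcut if there is a bound `θ` on the lengths of its isometric cycles. -/
def Shortcut (G : SimpleGraph V) : Prop :=
  ∃ θ : ℕ, ∀ (n : ℕ) (c : ZMod n → V), 0 < n → IsCycle G n c → IsIsometricCycle G n c → n ≤ θ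

/-- A graph is strongly shortcut if for some `ξ ∈ (0,1)` there is a bound `θ` on the lengths
of its `ξ`-almost isometric cycles. -/
def StronglyShortcut (G : SimpleGraph V) : Prop :=
  ∃ (θ : ℕ) (ξ : ℝ), 0 < ξ ∧ ξ < 1 ∧
    ∀ (n : ℕ) (c : ZMod n → V), 0 < n → IsCycle G n c → IsAlmostIsometricCycle G n c ξ → n ≤ θ

/-- The Cayley graph of `ℤ²` with respect to the finite (symmetrized) generating set `S`. -/
def z2Cayley (S : Finset (ℤ × ℤ)) : SimpleGraph (ℤ × ℤ) where
  Adj g h := g ≠ h ∧ (h - g ∈ S ∨ g - h ∈ S)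
  symm := ⟨by
    rintro g h ⟨hne, hs⟩
    exact ⟨hne.symm, hs.symm⟩⟩
  loopless := ⟨fun g hg => hg.1 rfl⟩

lemma z2Cayley_adj {S : Finset (ℤ × ℤ)} {g h : ℤ × ℤ} :
    (z2Cayley S).Adj g h ↔ g ≠ h ∧ (h - g ∈ S ∨ g - h ∈ S) := Iff.rfl

def Tset (S : Finset (ℤ × ℤ)) : Finset (ℤ × ℤ) := S ∪ S.image (fun s => -s)

lemma mem_Tset_iff {S : Finset (ℤ × ℤ)} {t : ℤ × ℤ} :
    t ∈ Tset S ↔ t ∈ S ∨ -t ∈ S := by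
  simp only [Tset, Finset.mem_union, Finset.mem_image]
  constructor
  · rintro (h | ⟨y, hy, rfl⟩)
    · exact Or.inl h
    · right; simpa using hy
  · rintro (h | h)
    · exact Or.inl h
    · exact Or.inr ⟨-t, h, by simp⟩

lemma neg_mem_Tset {S : Finset (ℤ × ℤ)} {t : ℤ × ℤ} (h : t ∈ Tset S) : -t ∈ Tset S := by
  rw [mem_Tset_iff] at h ⊢; simpa [or_comm] using h

lemma step_mem_Tset {S : Finset (ℤ × ℤ)} {g h : ℤ × ℤ} (hadj : (z2Cayley S).Adj g h) :
    h - g ∈ Tset S := by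
  rcases (z2Cayley_adj.1 hadj).2 with h1 | h1
  · exact mem_Tset_iff.2 (Or.inl h1)
  · exact mem_Tset_iff.2 (Or.inr (by simpa using h1))

lemma adj_of_mem_Tset {S : Finset (ℤ × ℤ)} {g h : ℤ × ℤ} (hne : g ≠ h)
    (hmem : h - g ∈ Tset S) : (z2Cayley S).Adj g h := by
  rcases mem_Tset_iff.1 hmem with h1 | h1
  · exact z2Cayley_adj.2 ⟨hne, Or.inl h1⟩
  · exact z2Cayley_adj.2 ⟨hne, Or.inr (by simpa using h1)⟩

def addHom (S : Finset (ℤ × ℤ)) (g : ℤ × ℤ) : z2Cayley S →g z2Cayley S where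
  toFun v := g + v
  map_rel' := by
    rintro a b hab
    obtain ⟨hne, hs⟩ := z2Cayley_adj.1 hab
    exact z2Cayley_adj.2 ⟨by simpa using hne, by simpa using hs⟩

def negHom (S : Finset (ℤ × ℤ)) : z2Cayley S →g z2Cayley S where
  toFun v := -v
  map_rel' := by
    rintro a b hab
    obtain ⟨hne, hs⟩ := z2Cayley_adj.1 hab
    refine z2Cayley_adj.2 ⟨fun h => hne (neg_injective h), ?_⟩
    simp only [neg_sub_neg]
    exact hs.symm

lemma reachable_add {S : Finset (ℤ × ℤ)} (g : ℤ × ℤ) {x y : ℤ × ℤ}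
    (h : (z2Cayley S).Reachable x y) : (z2Cayley S).Reachable (g + x) (g + y) := by
  obtain ⟨w⟩ := h
  exact ⟨w.map (addHom S g)⟩

lemma reachable_neg {S : Finset (ℤ × ℤ)} {x y : ℤ × ℤ}
    (h : (z2Cayley S).Reachable x y) : (z2Cayley S).Reachable (-x) (-y) := by
  obtain ⟨w⟩ := h
  exact ⟨w.map (negHom S)⟩

lemma reachable_zero (S : Finset (ℤ × ℤ))
    (hgen : AddSubgroup.closure (S : Set (ℤ × ℤ)) = ⊤) (v : ℤ × ℤ) :
    (z2Cayley S).Reachable 0 v := by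
  have hv : v ∈ AddSubgroup.closure (S : Set (ℤ × ℤ)) := by rw [hgen]; trivial
  induction hv using AddSubgroup.closure_induction with
  | mem s hs =>
      by_cases h0 : s = 0
      · subst h0; exact SimpleGraph.Reachable.refl 0
      · exact (adj_of_mem_Tset (Ne.symm h0) (by simpa using mem_Tset_iff.2 (Or.inl hs))).reachable
  | zero => exact SimpleGraph.Reachable.refl 0
  | add x y _ _ hx hy =>
      refine hx.trans ?_
      simpa using reachable_add x hy
  | neg x _ hx => simpa using reachable_neg hx

lemma connected_z2 (S : Finset (ℤ × ℤ))
    (hgen : AddSubgroup.closure (S : Set (ℤ × ℤ)) = ⊤) : (z2Cayley S).Connected := by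
  rw [SimpleGraph.connected_iff]
  refine ⟨fun x y => ?_, ⟨0⟩⟩
  have hx := reachable_zero S hgen x
  have hy := reachable_zero S hgen y
  exact hx.symm.trans hy

lemma dist_add {S : Finset (ℤ × ℤ)} (hgen : AddSubgroup.closure (S : Set (ℤ × ℤ)) = ⊤)
    (g x y : ℤ × ℤ) : (z2Cayley S).dist (g + x) (g + y) = (z2Cayley S).dist x y := by
  have key : ∀ (g x y : ℤ × ℤ),
      (z2Cayley S).dist (g + x) (g + y) ≤ (z2Cayley S).dist x y := by
    intro g x y
    obtain ⟨w, hw⟩ := ((connected_z2 S hgen) x y).exists_walk_length_eq_dist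
    calc (z2Cayley S).dist (g + x) (g + y) ≤ (w.map (addHom S g)).length :=
          SimpleGraph.dist_le _
      _ = (z2Cayley S).dist x y := by rw [SimpleGraph.Walk.length_map, hw]
  refine le_antisymm (key g x y) ?_
  have := key (-g) (g + x) (g + y)
  simpa using this

lemma dist_eq_dist_zero_sub {S : Finset (ℤ × ℤ)}
    (hgen : AddSubgroup.closure (S : Set (ℤ × ℤ)) = ⊤) (x y : ℤ × ℤ) :
    (z2Cayley S).dist x y = (z2Cayley S).dist 0 (y - x) := by
  have := dist_add hgen (-x) x y
  rw [sub_eq_neg_add]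
  simpa using this.symm

lemma dist_zero_gen_le {S : Finset (ℤ × ℤ)} {t : ℤ × ℤ} (ht : t ∈ Tset S) :
    (z2Cayley S).dist 0 t ≤ 1 := by
  by_cases h0 : t = 0
  · simp [h0, SimpleGraph.dist_self]
  · have : (z2Cayley S).Adj 0 t := adj_of_mem_Tset (Ne.symm h0) (by simpa using ht)
    exact le_of_eq (SimpleGraph.dist_eq_one_iff_adj.2 this)

lemma dist_zero_add_le {S : Finset (ℤ × ℤ)}
    (hgen : AddSubgroup.closure (S : Set (ℤ × ℤ)) = ⊤) (x y : ℤ × ℤ) :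
    (z2Cayley S).dist 0 (x + y) ≤ (z2Cayley S).dist 0 x + (z2Cayley S).dist 0 y := by
  calc (z2Cayley S).dist 0 (x + y)
      ≤ (z2Cayley S).dist 0 x + (z2Cayley S).dist x (x + y) :=
        (connected_z2 S hgen).dist_triangle
    _ = (z2Cayley S).dist 0 x + (z2Cayley S).dist 0 y := by
        rw [dist_eq_dist_zero_sub hgen x (x + y)]; ring_nf

lemma dist_zero_nsmul_le {S : Finset (ℤ × ℤ)}
    (hgen : AddSubgroup.closure (S : Set (ℤ × ℤ)) = ⊤) {t : ℤ × ℤ} (ht : t ∈ Tset S)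
    (k : ℕ) : (z2Cayley S).dist 0 (k • t) ≤ k := by
  induction k with
  | zero => simp
  | succ k ih =>
      have : (k + 1) • t = k • t + t := by rw [add_smul, one_smul]
      rw [this]
      calc (z2Cayley S).dist 0 (k • t + t)
          ≤ (z2Cayley S).dist 0 (k • t) + (z2Cayley S).dist 0 t := dist_zero_add_le hgen _ _
        _ ≤ k + 1 := add_le_add ih (dist_zero_gen_le ht)



def dotR (w x : ℝ × ℝ) : ℝ := w.1 * x.1 + w.2 * x.2
def detR (x y : ℝ × ℝ) : ℝ := x.1 * y.2 - x.2 * y.1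
def eR (v : ℤ × ℤ) : ℝ × ℝ := ((v.1 : ℝ), (v.2 : ℝ))
def solR (t u : ℝ × ℝ) : ℝ × ℝ := ((u.2 - t.2) / detR t u, (t.1 - u.1) / detR t u)
def aCoef (x t u : ℝ × ℝ) : ℝ := detR x u / detR t u
def bCoef (x t u : ℝ × ℝ) : ℝ := detR t x / detR t u

lemma dot_sol_left {t u : ℝ × ℝ} (h : detR t u ≠ 0) : dotR (solR t u) t = 1 := by
  simp only [dotR, solR, detR] at *
  rw [div_mul_eq_mul_div, div_mul_eq_mul_div, ← add_div, div_eq_one_iff_eq h]; ring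

lemma dot_sol_right {t u : ℝ × ℝ} (h : detR t u ≠ 0) : dotR (solR t u) u = 1 := by
  simp only [dotR, solR, detR] at *
  rw [div_mul_eq_mul_div, div_mul_eq_mul_div, ← add_div, div_eq_one_iff_eq h]; ring

lemma cramer1 {t u : ℝ × ℝ} (x : ℝ × ℝ) (h : detR t u ≠ 0) :
    x.1 = aCoef x t u * t.1 + bCoef x t u * u.1 := by
  simp only [aCoef, bCoef, detR] at *
  rw [div_mul_eq_mul_div, div_mul_eq_mul_div, ← add_div, eq_div_iff h]; ring

lemma cramer2 {t u : ℝ × ℝ} (x : ℝ × ℝ) (h : detR t u ≠ 0) :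
    x.2 = aCoef x t u * t.2 + bCoef x t u * u.2 := by
  simp only [aCoef, bCoef, detR] at *
  rw [div_mul_eq_mul_div, div_mul_eq_mul_div, ← add_div, eq_div_iff h]; ring

lemma coef_unique {t u x : ℝ × ℝ} (h : detR t u ≠ 0) {a b : ℝ}
    (h1 : x.1 = a * t.1 + b * u.1) (h2 : x.2 = a * t.2 + b * u.2) :
    a = aCoef x t u ∧ b = bCoef x t u := by
  constructor
  · simp only [aCoef, detR] at *
    rw [eq_div_iff h, h1, h2]; ring
  · simp only [bCoef, detR] at *
    rw [eq_div_iff h, h1, h2]; ring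

lemma dot_sol_eq_coef_sum {t u : ℝ × ℝ} (h : detR t u ≠ 0) (y : ℝ × ℝ) :
    dotR (solR t u) y = aCoef y t u + bCoef y t u := by
  simp only [dotR, solR, aCoef, bCoef, detR] at *; field_simp; ring

lemma detR_add_smul (x u y : ℝ × ℝ) (ε : ℝ) :
    detR (x + ε • u) y = detR x y + ε * detR u y := by
  simp only [detR, Prod.fst_add, Prod.snd_add, Prod.smul_fst, Prod.smul_snd, smul_eq_mul]; ring

lemma dotR_add_smul (w x u : ℝ × ℝ) (ε : ℝ) :
    dotR w (x + ε • u) = dotR w x + ε * dotR w u := by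
  simp only [dotR, Prod.fst_add, Prod.snd_add, Prod.smul_fst, Prod.smul_snd, smul_eq_mul]; ring

lemma eR_neg (t : ℤ × ℤ) : eR (-t) = -(eR t) := by
  simp [eR, Prod.ext_iff]

lemma eR_sub (x y : ℤ × ℤ) : eR (x - y) = eR x - eR y := by
  simp [eR, Prod.ext_iff]

lemma dotR_sub (w x y : ℝ × ℝ) : dotR w (x - y) = dotR w x - dotR w y := by
  simp only [dotR, Prod.fst_sub, Prod.snd_sub]; ring

lemma detR_neg_left (x y : ℝ × ℝ) : detR (-x) y = -detR x y := by
  simp only [detR, Prod.fst_neg, Prod.snd_neg]; ring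

lemma detR_neg_right (x y : ℝ × ℝ) : detR x (-y) = -detR x y := by
  simp only [detR, Prod.fst_neg, Prod.snd_neg]; ring

/-- The finite set of candidate dual functionals. -/
def Phi (S : Finset (ℤ × ℤ)) : Finset (ℝ × ℝ) :=
  ((Tset S ×ˢ Tset S).filter (fun p => detR (eR p.1) (eR p.2) ≠ 0 ∧
      ∀ t ∈ Tset S, dotR (solR (eR p.1) (eR p.2)) (eR t) ≤ 1)).image
    (fun p => solR (eR p.1) (eR p.2))

lemma Phi_feasible {S : Finset (ℤ × ℤ)} {w : ℝ × ℝ} (hw : w ∈ Phi S) :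
    ∀ t ∈ Tset S, dotR w (eR t) ≤ 1 := by
  simp only [Phi, Finset.mem_image, Finset.mem_filter] at hw
  obtain ⟨p, ⟨-, -, hfeas⟩, rfl⟩ := hw
  exact hfeas

/-- There exist two generators with nonzero determinant. -/
lemma exists_indep (S : Finset (ℤ × ℤ))
    (hgen : AddSubgroup.closure (S : Set (ℤ × ℤ)) = ⊤) :
    ∃ t ∈ Tset S, ∃ u ∈ Tset S, detR (eR t) (eR u) ≠ 0 := by
  by_contra hcon
  push_neg at hcon
  -- all pairs of elements of S are linearly dependent
  have hdep : ∀ s ∈ S, ∀ s' ∈ S, s.1 * s'.2 - s.2 * s'.1 = 0 := by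
    intro s hs s' hs'
    have h := hcon s (mem_Tset_iff.2 (Or.inl hs)) s' (mem_Tset_iff.2 (Or.inl hs'))
    have : ((s.1 * s'.2 - s.2 * s'.1 : ℤ) : ℝ) = 0 := by
      simpa [detR, eR] using h
    exact_mod_cast this
  by_cases hS0 : ∀ s ∈ S, s = (0 : ℤ × ℤ)
  · -- S ⊆ {0}, closure is trivial
    have : ((1, 0) : ℤ × ℤ) ∈ AddSubgroup.closure (S : Set (ℤ × ℤ)) := by
      rw [hgen]; trivial
    have hle : AddSubgroup.closure (S : Set (ℤ × ℤ)) ≤ ⊥ := by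
      rw [AddSubgroup.closure_le]
      intro s hs
      simp only [SetLike.mem_coe, AddSubgroup.mem_bot]
      exact hS0 s hs
    have := hle this
    simp [AddSubgroup.mem_bot, Prod.ext_iff] at this
  · push_neg at hS0
    obtain ⟨s0, hs0S, hs0⟩ := hS0
    set f : ℤ × ℤ →+ ℤ :=
      { toFun := fun v => s0.1 * v.2 - s0.2 * v.1
        map_zero' := by simp
        map_add' := by intro a b; simp only [Prod.snd_add, Prod.fst_add]; ring } with hf
    have hker : AddSubgroup.closure (S : Set (ℤ × ℤ)) ≤ f.ker := by
      rw [AddSubgroup.closure_le]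
      intro s hs
      simp only [SetLike.mem_coe, AddMonoidHom.mem_ker, hf, AddMonoidHom.coe_mk,
        ZeroHom.coe_mk]
      exact hdep s0 hs0S s hs
    have h10 : f (1, 0) = 0 := by
      have : ((1, 0) : ℤ × ℤ) ∈ AddSubgroup.closure (S : Set (ℤ × ℤ)) := by rw [hgen]; trivial
      exact hker this
    have h01 : f (0, 1) = 0 := by
      have : ((0, 1) : ℤ × ℤ) ∈ AddSubgroup.closure (S : Set (ℤ × ℤ)) := by rw [hgen]; trivial
      exact hker this
    apply hs0
    simp only [hf, AddMonoidHom.coe_mk, ZeroHom.coe_mk] at h10 h01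
    have e1 : s0.2 = 0 := by omega
    have e2 : s0.1 = 0 := by omega
    exact Prod.ext e2 e1

lemma detR_swap (x y : ℝ × ℝ) : detR x y = -detR y x := by
  simp only [detR]; ring

lemma aCoef_neg_left (x t u : ℝ × ℝ) : aCoef x (-t) u = -aCoef x t u := by
  simp only [aCoef, detR_neg_left, div_neg]

lemma aCoef_neg_right (x t u : ℝ × ℝ) : aCoef x t (-u) = aCoef x t u := by
  simp only [aCoef, detR_neg_right, neg_div_neg_eq]

lemma bCoef_neg_left (x t u : ℝ × ℝ) : bCoef x (-t) u = bCoef x t u := by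
  simp only [bCoef, detR_neg_left, neg_div_neg_eq]

lemma bCoef_neg_right (x t u : ℝ × ℝ) : bCoef x t (-u) = -bCoef x t u := by
  simp only [bCoef, detR_neg_right, div_neg]

/-- The key duality lemma in the generic case. -/
lemma Q_generic (S : Finset (ℤ × ℤ))
    (hgen : AddSubgroup.closure (S : Set (ℤ × ℤ)) = ⊤) (x : ℝ × ℝ)
    (hx : ∀ t ∈ Tset S, eR t ≠ 0 → detR x (eR t) ≠ 0) :
    ∃ t ∈ Tset S, ∃ t' ∈ Tset S, detR (eR t) (eR t') ≠ 0 ∧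
      0 ≤ aCoef x (eR t) (eR t') ∧ 0 ≤ bCoef x (eR t) (eR t') ∧
      solR (eR t) (eR t') ∈ Phi S := by
  set P : Finset ((ℤ × ℤ) × (ℤ × ℤ)) :=
    (Tset S ×ˢ Tset S).filter (fun p => detR (eR p.1) (eR p.2) ≠ 0 ∧
      0 ≤ aCoef x (eR p.1) (eR p.2) ∧ 0 ≤ bCoef x (eR p.1) (eR p.2)) with hP
  have hPmem : ∀ p : (ℤ × ℤ) × (ℤ × ℤ), p ∈ P ↔
      p.1 ∈ Tset S ∧ p.2 ∈ Tset S ∧ detR (eR p.1) (eR p.2) ≠ 0 ∧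
      0 ≤ aCoef x (eR p.1) (eR p.2) ∧ 0 ≤ bCoef x (eR p.1) (eR p.2) := by
    intro p
    simp only [hP, Finset.mem_filter, Finset.mem_product, and_assoc]
  -- nonemptiness
  obtain ⟨t1, ht1, t2, ht2, hD12⟩ := exists_indep S hgen
  have hPne : P.Nonempty := by
    rcases le_or_gt 0 (aCoef x (eR t1) (eR t2)) with ha | ha <;>
      rcases le_or_gt 0 (bCoef x (eR t1) (eR t2)) with hb | hb
    · exact ⟨(t1, t2), (hPmem _).2 ⟨ht1, ht2, hD12, ha, hb⟩⟩
    · refine ⟨(t1, -t2), (hPmem _).2 ⟨ht1, neg_mem_Tset ht2, ?_, ?_, ?_⟩⟩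
      · show detR (eR t1) (eR (-t2)) ≠ 0
        rw [eR_neg, detR_neg_right]; exact neg_ne_zero.2 hD12
      · show 0 ≤ aCoef x (eR t1) (eR (-t2))
        rw [eR_neg, aCoef_neg_right]; exact ha
      · show 0 ≤ bCoef x (eR t1) (eR (-t2))
        rw [eR_neg, bCoef_neg_right]; linarith
    · refine ⟨(-t1, t2), (hPmem _).2 ⟨neg_mem_Tset ht1, ht2, ?_, ?_, ?_⟩⟩
      · show detR (eR (-t1)) (eR t2) ≠ 0
        rw [eR_neg, detR_neg_left]; exact neg_ne_zero.2 hD12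
      · show 0 ≤ aCoef x (eR (-t1)) (eR t2)
        rw [eR_neg, aCoef_neg_left]; linarith
      · show 0 ≤ bCoef x (eR (-t1)) (eR t2)
        rw [eR_neg, bCoef_neg_left]; exact hb
    · refine ⟨(-t1, -t2), (hPmem _).2 ⟨neg_mem_Tset ht1, neg_mem_Tset ht2, ?_, ?_, ?_⟩⟩
      · show detR (eR (-t1)) (eR (-t2)) ≠ 0
        rw [eR_neg, eR_neg, detR_neg_left, detR_neg_right, neg_neg]; exact hD12
      · show 0 ≤ aCoef x (eR (-t1)) (eR (-t2))
        rw [eR_neg, eR_neg, aCoef_neg_left, aCoef_neg_right]; linarith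
      · show 0 ≤ bCoef x (eR (-t1)) (eR (-t2))
        rw [eR_neg, eR_neg, bCoef_neg_left, bCoef_neg_right]; linarith
  -- minimisation
  obtain ⟨p, hpP, hmin⟩ := P.exists_min_image
    (fun p => aCoef x (eR p.1) (eR p.2) + bCoef x (eR p.1) (eR p.2)) hPne
  obtain ⟨ht, ht', hD, ha, hb⟩ := (hPmem p).1 hpP
  obtain ⟨t, t'⟩ := p
  dsimp only at ht ht' hD ha hb hmin
  set et := eR t with het
  set et' := eR t' with het'
  set a := aCoef x et et' with haDef
  set b := bCoef x et et' with hbDef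
  have het'0 : et' ≠ 0 := by
    intro h; apply hD; rw [h]; simp [detR]
  have het0 : et ≠ 0 := by
    intro h; apply hD; rw [h]; simp [detR]
  have hapos : 0 < a := by
    rcases lt_or_eq_of_le ha with h | h
    · exact h
    · exfalso
      have : detR x et' ≠ 0 := hx t' ht' het'0
      have : a ≠ 0 := div_ne_zero this hD
      exact this h.symm
  have hbpos : 0 < b := by
    rcases lt_or_eq_of_le hb with h | h
    · exact h
    · exfalso
      have h1 : detR x et ≠ 0 := hx t ht het0
      have h2 : detR et x ≠ 0 := by rw [detR_swap]; simpa using h1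
      exact (div_ne_zero h2 hD) h.symm
  -- feasibility of the optimal dual vector
  have hfeas : ∀ s ∈ Tset S, dotR (solR et et') (eR s) ≤ 1 := by
    by_contra hcon
    push_neg at hcon
    obtain ⟨s, hsT, hs⟩ := hcon
    set es := eR s with hes
    set p' := aCoef es et et' with hp'Def
    set q := bCoef es et et' with hqDef
    have hpq : 1 < p' + q := by rw [← dot_sol_eq_coef_sum hD es]; exact hs
    have hs1 : es.1 = p' * et.1 + q * et'.1 := cramer1 es hD
    have hs2 : es.2 = p' * et.2 + q * et'.2 := cramer2 es hD
    have hx1 : x.1 = a * et.1 + b * et'.1 := cramer1 x hD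
    have hx2 : x.2 = a * et.2 + b * et'.2 := cramer2 x hD
    have hcase : (0 < q ∧ b * p' ≤ a * q) ∨ (0 < p' ∧ a * q ≤ b * p') := by
      rcases le_or_gt p' 0 with hp | hp
      · left
        constructor
        · linarith
        · nlinarith
      · rcases le_or_gt q 0 with hq | hq
        · right; exact ⟨hp, by nlinarith⟩
        · rcases le_total (b * p') (a * q) with h | h
          · exact Or.inl ⟨hq, h⟩
          · exact Or.inr ⟨hp, h⟩
    rcases hcase with ⟨hq, hba⟩ | ⟨hp, hab⟩
    · -- exchange t' for s
      have hDts : detR et es = q * detR et et' := by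
        simp only [detR]; rw [hs1, hs2]; ring
      have hDts0 : detR et es ≠ 0 := by rw [hDts]; exact mul_ne_zero (ne_of_gt hq) hD
      have hxs : detR x es = (a * q - b * p') * detR et et' := by
        simp only [detR]; rw [hx1, hx2, hs1, hs2]; ring
      have htx : detR et x = b * detR et et' := by
        simp only [detR]; rw [hx1, hx2]; ring
      have hA : aCoef x et es = (a * q - b * p') / q := by
        rw [aCoef, hxs, hDts]
        rw [mul_comm q (detR et et'), mul_comm (a * q - b * p') (detR et et'),
          mul_div_mul_left _ _ hD]
      have hB : bCoef x et es = b / q := by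
        rw [bCoef, htx, hDts]
        rw [mul_comm q (detR et et'), mul_comm b (detR et et'),
          mul_div_mul_left _ _ hD]
      have hmem : (t, s) ∈ P := by
        rw [hPmem]
        exact ⟨ht, hsT, hDts0, by rw [hA]; exact div_nonneg (by linarith) hq.le,
          by rw [hB]; exact div_nonneg hbpos.le hq.le⟩
      have := hmin (t, s) hmem
      dsimp only at this
      rw [hA, hB, ← add_div, le_div_iff₀ hq] at this
      nlinarith [mul_pos hbpos (show (0:ℝ) < p' + q - 1 by linarith)]
    · -- exchange t for s
      have hDst : detR es et' = p' * detR et et' := by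
        simp only [detR]; rw [hs1, hs2]; ring
      have hDst0 : detR es et' ≠ 0 := by rw [hDst]; exact mul_ne_zero (ne_of_gt hp) hD
      have hxt' : detR x et' = a * detR et et' := by
        simp only [detR]; rw [hx1, hx2]; ring
      have hsx : detR es x = (p' * b - q * a) * detR et et' := by
        simp only [detR]; rw [hx1, hx2, hs1, hs2]; ring
      have hA : aCoef x es et' = a / p' := by
        rw [aCoef, hxt', hDst]
        rw [mul_comm p' (detR et et'), mul_comm a (detR et et'),
          mul_div_mul_left _ _ hD]
      have hB : bCoef x es et' = (p' * b - q * a) / p' := by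
        rw [bCoef, hsx, hDst]
        rw [mul_comm p' (detR et et'), mul_comm (p' * b - q * a) (detR et et'),
          mul_div_mul_left _ _ hD]
      have hmem : (s, t') ∈ P := by
        rw [hPmem]
        exact ⟨hsT, ht', hDst0, by rw [hA]; exact div_nonneg hapos.le hp.le,
          by rw [hB]; exact div_nonneg (by linarith) hp.le⟩
      have := hmin (s, t') hmem
      dsimp only at this
      rw [hA, hB, ← add_div, le_div_iff₀ hp] at this
      nlinarith [mul_pos hapos (show (0:ℝ) < p' + q - 1 by linarith)]
  refine ⟨t, ht, t', ht', hD, ha, hb, ?_⟩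
  rw [Phi, Finset.mem_image]
  exact ⟨(t, t'), Finset.mem_filter.2 ⟨Finset.mem_product.2 ⟨ht, ht'⟩, hD, hfeas⟩, rfl⟩

lemma nonneg_of_freq (c0 c1 : ℝ)
    (h : ∀ δ : ℝ, 0 < δ → ∃ ε : ℝ, 0 < ε ∧ ε < δ ∧ 0 ≤ c0 + ε * c1) : 0 ≤ c0 := by
  by_contra hc
  push_neg at hc
  obtain ⟨ε, hε0, hεδ, hεc⟩ := h (-c0 / (|c1| + 1))
    (div_pos (by linarith) (by positivity))
  have h1 : ε * c1 ≤ ε * |c1| := by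
    exact mul_le_mul_of_nonneg_left (le_abs_self c1) hε0.le
  have h2 : ε * (|c1| + 1) < -c0 := by
    rw [← lt_div_iff₀ (by positivity)]
    exact hεδ
  nlinarith [abs_nonneg c1]

/-- A generic direction avoiding all generator directions. -/
lemma exists_generic_dir (S : Finset (ℤ × ℤ)) :
    ∃ u : ℝ × ℝ, ∀ t ∈ Tset S, eR t ≠ 0 → detR u (eR t) ≠ 0 := by
  obtain ⟨y0, hy0⟩ := Infinite.exists_notMem_finset
    ((Tset S).image (fun t => ((t.2 : ℝ) / (t.1 : ℝ))))
  refine ⟨(1, y0), fun t ht ht0 => ?_⟩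
  intro hdet
  have hdet' : (t.2 : ℝ) - y0 * t.1 = 0 := by
    simpa [detR, eR] using hdet
  by_cases h1 : (t.1 : ℝ) = 0
  · apply ht0
    have h2 : (t.2 : ℝ) = 0 := by
      rw [h1, mul_zero, sub_zero] at hdet'; exact hdet'
    have he : eR t = ((t.1 : ℝ), (t.2 : ℝ)) := rfl
    rw [he, h1, h2]; rfl
  · apply hy0
    rw [Finset.mem_image]
    refine ⟨t, ht, ?_⟩
    field_simp
    linarith

/-- Strong duality with rounding error: the main consequence of `Q_generic`. -/
lemma Qmain (S : Finset (ℤ × ℤ))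
    (hgen : AddSubgroup.closure (S : Set (ℤ × ℤ)) = ⊤) (v : ℤ × ℤ) :
    ∃ w ∈ Phi S, ∃ t ∈ Tset S, ∃ t' ∈ Tset S, ∃ a b : ℝ, 0 ≤ a ∧ 0 ≤ b ∧
      ((v.1 : ℝ) = a * (t.1 : ℝ) + b * (t'.1 : ℝ)) ∧
      ((v.2 : ℝ) = a * (t.2 : ℝ) + b * (t'.2 : ℝ)) ∧
      a + b ≤ dotR w (eR v) := by
  obtain ⟨u, hu⟩ := exists_generic_dir S
  -- the finitely many bad epsilons
  set Bad : Finset ℝ := (Tset S).image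
    (fun t => -detR (eR v) (eR t) / detR u (eR t)) with hBad
  have hgood : ∀ δ : ℝ, 0 < δ → ∃ ε : ℝ, 0 < ε ∧ ε < δ ∧
      ∀ t ∈ Tset S, eR t ≠ 0 → detR (eR v + ε • u) (eR t) ≠ 0 := by
    intro δ hδ
    have hinf : (Set.Ioo (0:ℝ) δ \ (Bad : Set ℝ)).Infinite :=
      (Set.Ioo_infinite hδ).diff (Bad.finite_toSet)
    obtain ⟨ε, hε⟩ := hinf.nonempty
    obtain ⟨⟨hε0, hεδ⟩, hεB⟩ := hε
    refine ⟨ε, hε0, hεδ, fun t ht ht0 => ?_⟩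
    rw [detR_add_smul]
    intro heq
    apply hεB
    simp only [Finset.coe_image, Set.mem_image, Finset.mem_coe, hBad]
    refine ⟨t, ht, ?_⟩
    have hut : detR u (eR t) ≠ 0 := hu t ht ht0
    field_simp
    linarith
  -- pigeonhole: one fixed pair works for arbitrarily small ε
  have hkey : ∃ p : (ℤ × ℤ) × (ℤ × ℤ), p.1 ∈ Tset S ∧ p.2 ∈ Tset S ∧
      detR (eR p.1) (eR p.2) ≠ 0 ∧ solR (eR p.1) (eR p.2) ∈ Phi S ∧
      ∀ δ : ℝ, 0 < δ → ∃ ε : ℝ, 0 < ε ∧ ε < δ ∧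
        0 ≤ aCoef (eR v + ε • u) (eR p.1) (eR p.2) ∧
        0 ≤ bCoef (eR v + ε • u) (eR p.1) (eR p.2) := by
    by_contra hcon
    push_neg at hcon
    -- for each pair satisfying the fixed conditions, pick a threshold δ
    have hδ : ∀ p : (ℤ × ℤ) × (ℤ × ℤ),
        ∃ δ : ℝ, 0 < δ ∧ (p.1 ∈ Tset S → p.2 ∈ Tset S →
          detR (eR p.1) (eR p.2) ≠ 0 → solR (eR p.1) (eR p.2) ∈ Phi S →
          ∀ ε : ℝ, 0 < ε → ε < δ →
            ¬(0 ≤ aCoef (eR v + ε • u) (eR p.1) (eR p.2) ∧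
              0 ≤ bCoef (eR v + ε • u) (eR p.1) (eR p.2))) := by
      intro p
      by_cases h1 : p.1 ∈ Tset S
      · by_cases h2 : p.2 ∈ Tset S
        · by_cases h3 : detR (eR p.1) (eR p.2) ≠ 0
          · by_cases h4 : solR (eR p.1) (eR p.2) ∈ Phi S
            · obtain ⟨δ, hδ0, hδp⟩ := hcon p h1 h2 h3 h4
              refine ⟨δ, hδ0, fun _ _ _ _ ε hε0 hεδ => ?_⟩
              intro ⟨hA, hB⟩
              exact absurd (hδp ε hε0 hεδ hA) (not_lt.2 hB)
            · exact ⟨1, one_pos, fun _ _ _ h4' => absurd h4' h4⟩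
          · exact ⟨1, one_pos, fun _ _ h3' _ => absurd h3' h3⟩
        · exact ⟨1, one_pos, fun _ h2' _ _ => absurd h2' h2⟩
      · exact ⟨1, one_pos, fun h1' _ _ _ => absurd h1' h1⟩
    choose δf hδf0 hδf using hδ
    -- minimum threshold over all pairs
    set Ω : Finset ((ℤ × ℤ) × (ℤ × ℤ)) := Tset S ×ˢ Tset S with hΩ
    set δmin : ℝ := min 1 (if h : Ω.Nonempty then (Ω.image δf).min' (h.image δf) else 1)
      with hδmin
    have hδminpos : 0 < δmin := by
      rcases Classical.em Ω.Nonempty with h | h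
      · rw [hδmin, dif_pos h]
        apply lt_min one_pos
        obtain ⟨p, hp, hpe⟩ := Finset.mem_image.1 ((Ω.image δf).min'_mem (h.image δf))
        rw [← hpe]; exact hδf0 p
      · rw [hδmin, dif_neg h]; norm_num
    obtain ⟨ε, hε0, hεδ, hεg⟩ := hgood δmin hδminpos
    obtain ⟨t, ht, t', ht', hD, hA, hB, hsol⟩ := Q_generic S hgen (eR v + ε • u) hεg
    have hΩmem : (t, t') ∈ Ω := Finset.mem_product.2 ⟨ht, ht'⟩
    have hle : δmin ≤ δf (t, t') := by
      rw [hδmin, dif_pos ⟨_, hΩmem⟩]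
      exact le_trans (min_le_right _ _) (Finset.min'_le _ _ (Finset.mem_image_of_mem δf hΩmem))
    exact hδf (t, t') ht ht' hD hsol ε hε0 (lt_of_lt_of_le hεδ hle) ⟨hA, hB⟩
  obtain ⟨⟨t, t'⟩, ht, ht', hD, hsol, hfreq⟩ := hkey
  -- pass to the limit ε → 0 in the affine coefficient functions
  have haff : ∀ ε : ℝ, aCoef (eR v + ε • u) (eR t) (eR t')
      = aCoef (eR v) (eR t) (eR t') + ε * (detR u (eR t') / detR (eR t) (eR t')) := by
    intro ε
    simp only [aCoef, detR_add_smul, add_div, mul_div_assoc]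
  have hdet2 : ∀ ε : ℝ, detR (eR t) (eR v + ε • u)
      = detR (eR t) (eR v) + ε * detR (eR t) u := by
    intro ε
    simp only [detR, Prod.fst_add, Prod.snd_add, Prod.smul_fst, Prod.smul_snd, smul_eq_mul]
    ring
  have hbff : ∀ ε : ℝ, bCoef (eR v + ε • u) (eR t) (eR t')
      = bCoef (eR v) (eR t) (eR t') + ε * (detR (eR t) u / detR (eR t) (eR t')) := by
    intro ε
    simp only [bCoef, hdet2, add_div, mul_div_assoc]
  have hdot : ∀ ε : ℝ, dotR (solR (eR t) (eR t')) (eR v + ε • u)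
      = dotR (solR (eR t) (eR t')) (eR v) + ε * dotR (solR (eR t) (eR t')) u :=
    fun ε => dotR_add_smul _ _ _ ε
  have ha0 : 0 ≤ aCoef (eR v) (eR t) (eR t') := by
    apply nonneg_of_freq _ (detR u (eR t') / detR (eR t) (eR t'))
    intro δ hδ
    obtain ⟨ε, h0, h1, hA, hB⟩ := hfreq δ hδ
    exact ⟨ε, h0, h1, by rw [haff ε] at hA; exact hA⟩
  have hb0 : 0 ≤ bCoef (eR v) (eR t) (eR t') := by
    apply nonneg_of_freq _ (detR (eR t) u / detR (eR t) (eR t'))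
    intro δ hδ
    obtain ⟨ε, h0, h1, hA, hB⟩ := hfreq δ hδ
    exact ⟨ε, h0, h1, by rw [hbff ε] at hB; exact hB⟩
  refine ⟨solR (eR t) (eR t'), hsol, t, ht, t', ht',
    aCoef (eR v) (eR t) (eR t'), bCoef (eR v) (eR t) (eR t'), ha0, hb0, ?_, ?_, ?_⟩
  · exact cramer1 (eR v) hD
  · exact cramer2 (eR v) hD
  · rw [dot_sol_eq_coef_sum hD]

/-- The coordinate bound for generators. -/
def Mbnd (S : Finset (ℤ × ℤ)) : ℕ := (Tset S).sup (fun t => t.1.natAbs ⊔ t.2.natAbs)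

/-- The additive constant: maximal distance to elements of a box. -/
def Kbnd (S : Finset (ℤ × ℤ)) : ℕ :=
  ((Finset.Icc (-(2 * (Mbnd S) : ℤ)) (2 * (Mbnd S) : ℤ)) ×ˢ
    (Finset.Icc (-(2 * (Mbnd S) : ℤ)) (2 * (Mbnd S) : ℤ))).sup
    (fun r => (z2Cayley S).dist 0 r)

lemma abs_comb_le {c d x y M : ℝ} (hc : |c| ≤ 1) (hd : |d| ≤ 1)
    (hx : |x| ≤ M) (hy : |y| ≤ M) : |c * x + d * y| ≤ 2 * M := by
  calc |c * x + d * y| ≤ |c * x| + |d * y| := abs_add_le _ _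
    _ = |c| * |x| + |d| * |y| := by rw [abs_mul, abs_mul]
    _ ≤ 1 * M + 1 * M := by
        have h1 : |c| * |x| ≤ 1 * M := mul_le_mul hc hx (abs_nonneg _) zero_le_one
        have h2 : |d| * |y| ≤ 1 * M := mul_le_mul hd hy (abs_nonneg _) zero_le_one
        linarith
    _ = 2 * M := by ring

lemma P2 (S : Finset (ℤ × ℤ))
    (hgen : AddSubgroup.closure (S : Set (ℤ × ℤ)) = ⊤) (v : ℤ × ℤ) :
    ∃ w ∈ Phi S, ((z2Cayley S).dist 0 v : ℝ) ≤ dotR w (eR v) + (Kbnd S : ℝ) := by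
  obtain ⟨w, hw, t, ht, t', ht', a, b, ha, hb, h1, h2, hsum⟩ := Qmain S hgen v
  refine ⟨w, hw, ?_⟩
  set na : ℕ := ⌊a⌋.toNat with hna
  set nb : ℕ := ⌊b⌋.toNat with hnb
  have hnaZ : (na : ℤ) = ⌊a⌋ := by rw [hna]; exact Int.toNat_of_nonneg (Int.floor_nonneg.2 ha)
  have hnbZ : (nb : ℤ) = ⌊b⌋ := by rw [hnb]; exact Int.toNat_of_nonneg (Int.floor_nonneg.2 hb)
  have hnaR : (na : ℝ) = (⌊a⌋ : ℝ) := by exact_mod_cast hnaZ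
  have hnbR : (nb : ℝ) = (⌊b⌋ : ℝ) := by exact_mod_cast hnbZ
  have hfa0 : 0 ≤ a - na := by rw [hnaR]; linarith [Int.floor_le a]
  have hfa1 : a - na < 1 := by rw [hnaR]; linarith [Int.lt_floor_add_one a]
  have hfb0 : 0 ≤ b - nb := by rw [hnbR]; linarith [Int.floor_le b]
  have hfb1 : b - nb < 1 := by rw [hnbR]; linarith [Int.lt_floor_add_one b]
  set r : ℤ × ℤ := v - (na • t + nb • t') with hr
  -- coordinates of r are small
  have hM : ∀ s : ℤ × ℤ, s ∈ Tset S → |(s.1 : ℝ)| ≤ (Mbnd S : ℝ) ∧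
      |(s.2 : ℝ)| ≤ (Mbnd S : ℝ) := by
    intro s hs
    have h1 := Finset.le_sup (f := fun t : ℤ × ℤ => t.1.natAbs ⊔ t.2.natAbs) hs
    constructor
    · rw [← Int.cast_abs]
      have : s.1.natAbs ≤ Mbnd S := le_trans (le_max_left _ _) h1
      have : |s.1| ≤ (Mbnd S : ℤ) := by
        rw [Int.abs_eq_natAbs]; exact_mod_cast this
      exact_mod_cast this
    · rw [← Int.cast_abs]
      have : s.2.natAbs ≤ Mbnd S := le_trans (le_max_right _ _) h1
      have : |s.2| ≤ (Mbnd S : ℤ) := by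
        rw [Int.abs_eq_natAbs]; exact_mod_cast this
      exact_mod_cast this
  have hr1Z : r.1 = v.1 - ((na : ℤ) * t.1 + (nb : ℤ) * t'.1) := by
    rw [hr]; simp [Prod.fst_sub, Prod.fst_add, Prod.smul_fst, nsmul_eq_mul]
  have hr2Z : r.2 = v.2 - ((na : ℤ) * t.2 + (nb : ℤ) * t'.2) := by
    rw [hr]; simp [Prod.snd_sub, Prod.snd_add, Prod.smul_snd, nsmul_eq_mul]
  have hr1R : (r.1 : ℝ) = (a - na) * t.1 + (b - nb) * t'.1 := by
    rw [hr1Z]; push_cast; rw [h1]; ring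
  have hr2R : (r.2 : ℝ) = (a - na) * t.2 + (b - nb) * t'.2 := by
    rw [hr2Z]; push_cast; rw [h2]; ring
  have hrbox : r ∈ (Finset.Icc (-(2 * (Mbnd S) : ℤ)) (2 * (Mbnd S) : ℤ)) ×ˢ
      (Finset.Icc (-(2 * (Mbnd S) : ℤ)) (2 * (Mbnd S) : ℤ)) := by
    rw [Finset.mem_product, Finset.mem_Icc, Finset.mem_Icc]
    have e1 : |a - (na : ℝ)| ≤ 1 := by rw [abs_of_nonneg hfa0]; linarith
    have e2 : |b - (nb : ℝ)| ≤ 1 := by rw [abs_of_nonneg hfb0]; linarith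
    have b1 : |(r.1 : ℝ)| ≤ 2 * (Mbnd S : ℝ) := by
      rw [hr1R]; exact abs_comb_le e1 e2 (hM t ht).1 (hM t' ht').1
    have b2 : |(r.2 : ℝ)| ≤ 2 * (Mbnd S : ℝ) := by
      rw [hr2R]; exact abs_comb_le e1 e2 (hM t ht).2 (hM t' ht').2
    have c1 : |r.1| ≤ (2 * (Mbnd S) : ℤ) := by
      have := b1
      rw [← Int.cast_abs] at this
      exact_mod_cast this
    have c2 : |r.2| ≤ (2 * (Mbnd S) : ℤ) := by
      have := b2
      rw [← Int.cast_abs] at this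
      exact_mod_cast this
    exact ⟨abs_le.1 c1, abs_le.1 c2⟩
  have hdr : (z2Cayley S).dist 0 r ≤ Kbnd S :=
    Finset.le_sup (f := fun r => (z2Cayley S).dist 0 r) hrbox
  have hveq : v = na • t + nb • t' + r := by rw [hr]; ring
  have hdist : (z2Cayley S).dist 0 v ≤ na + nb + Kbnd S := by
    rw [hveq]
    calc (z2Cayley S).dist 0 (na • t + nb • t' + r)
        ≤ (z2Cayley S).dist 0 (na • t + nb • t') + (z2Cayley S).dist 0 r :=
          dist_zero_add_le hgen _ _
      _ ≤ ((z2Cayley S).dist 0 (na • t) + (z2Cayley S).dist 0 (nb • t')) +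
            (z2Cayley S).dist 0 r := by
          gcongr
          exact dist_zero_add_le hgen _ _
      _ ≤ na + nb + Kbnd S := by
          gcongr
          · exact dist_zero_nsmul_le hgen ht na
          · exact dist_zero_nsmul_le hgen ht' nb
  calc ((z2Cayley S).dist 0 v : ℝ) ≤ ((na + nb + Kbnd S : ℕ) : ℝ) := by exact_mod_cast hdist
    _ = (na : ℝ) + nb + Kbnd S := by push_cast; ring
    _ ≤ a + b + Kbnd S := by
        have : (na : ℝ) ≤ a := by linarith
        have : (nb : ℝ) ≤ b := by linarith
        linarith
    _ ≤ dotR w (eR v) + Kbnd S := by linarith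

/-- Lipschitz bound over `k` steps. -/
lemma lipN (H : ℤ → ℝ) (lip : ∀ x : ℤ, |H (x + 1) - H x| ≤ 1) (x : ℤ) (k : ℕ) :
    |H (x + k) - H x| ≤ k := by
  induction k with
  | zero => simp
  | succ k ih =>
      have h1 : |H (x + k + 1) - H (x + k)| ≤ 1 := lip (x + k)
      have h2 : x + (k + 1 : ℕ) = (x + k) + 1 := by push_cast; ring
      rw [h2]
      calc |H (x + k + 1) - H x|
          ≤ |H (x + k + 1) - H (x + k)| + |H (x + k) - H x| := abs_sub_le _ _ _
        _ ≤ 1 + k := add_le_add h1 ih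
        _ = ((k + 1 : ℕ) : ℝ) := by push_cast; ring

/-- The key "two jumps" lemma: two parameters within `m` of each other at which the
antipodal increment of a 1-Lipschitz nearly-periodic function is at least `A` must in fact
be within about `m - A` of each other. -/
lemma arc (H : ℤ → ℝ) (m : ℕ) (lip : ∀ x : ℤ, |H (x + 1) - H x| ≤ 1)
    (per : ∀ x : ℤ, H (x + 2 * m) ≤ H x + 1) (A : ℝ) (i : ℤ) (d : ℕ) (hd : d ≤ m)
    (h1 : A ≤ H (i + m) - H i) (h2 : A ≤ H (i + d + m) - H (i + d)) :
    (d : ℝ) ≤ (m : ℝ) - A + 1 / 2 := by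
  have l1 : |H (i + m) - H (i + d)| ≤ ((m - d : ℕ) : ℝ) := by
    have := lipN H lip (i + d) (m - d)
    rwa [show (i + d) + ((m - d : ℕ) : ℤ) = i + m by omega] at this
  have l2 : |H (i + 2 * m) - H (i + d + m)| ≤ ((m - d : ℕ) : ℝ) := by
    have := lipN H lip (i + d + m) (m - d)
    rwa [show (i + d + m) + ((m - d : ℕ) : ℤ) = i + 2 * m by omega] at this
  have hmd : ((m - d : ℕ) : ℝ) = (m : ℝ) - d := by
    have : (d : ℤ) ≤ (m : ℤ) := by exact_mod_cast hd
    push_cast [Nat.cast_sub hd]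
    ring
  have p2 := per i
  rw [hmd] at l1 l2
  have l1' := abs_le.1 l1
  have l2' := abs_le.1 l2
  linarith [l1'.1, l1'.2, l2'.1, l2'.2]

/-- The covering lemma: if at every integer parameter some functional in a finite family
jumps by at least `A` across half the cycle, then the cycle is short. -/
lemma cover {W : Type*} (Φ : Finset W) (n : ℕ) (H : W → ℤ → ℝ) (A : ℝ)
    (lip : ∀ w ∈ Φ, ∀ x : ℤ, |H w (x + 1) - H w x| ≤ 1)
    (per : ∀ w ∈ Φ, ∀ x : ℤ, H w (x + n) = H w x)
    (hyp : ∀ i : ℤ, ∃ w ∈ Φ, A ≤ H w (i + (n / 2 : ℕ)) - H w i)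
    (b : ℕ) (hb : ((n / 2 : ℕ) : ℝ) - A + 1 / 2 ≤ b) :
    n ≤ Φ.card * (2 * b + 2) := by
  set m : ℕ := n / 2 with hm
  have F : ∀ i : ℕ, ∃ w ∈ Φ, A ≤ H w ((i : ℤ) + m) - H w i := fun i => hyp i
  choose f hfΦ hfA using F
  have hcard : (Finset.range n).card = ∑ w ∈ Φ,
      ((Finset.range n).filter (fun i => f i = w)).card :=
    Finset.card_eq_sum_card_fiberwise (fun i _ => hfΦ i)
  have hper2 : ∀ w ∈ Φ, ∀ x : ℤ, H w (x + 2 * m) ≤ H w x + 1 := by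
    intro w hw x
    rcases Nat.even_or_odd n with he | ho
    · obtain ⟨k, hk⟩ := he
      have h2m : 2 * (m : ℤ) = (n : ℤ) := by simp only [hm]; omega
      rw [h2m, per w hw x]; linarith
    · obtain ⟨k, hk⟩ := ho
      have h2m : 2 * (m : ℤ) = (n : ℤ) - 1 := by simp only [hm]; omega
      have hx : x + 2 * (m : ℤ) = (x - 1) + n := by rw [h2m]; ring
      rw [hx, per w hw (x - 1)]
      have hl := abs_le.1 (lip w hw (x - 1))
      rw [show x - 1 + 1 = x by ring] at hl
      linarith [hl.1, hl.2]
  -- bound each fiber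
  have hfiber : ∀ w ∈ Φ, ((Finset.range n).filter (fun i => f i = w)).card ≤ 2 * b + 2 := by
    intro w hw
    set E := (Finset.range n).filter (fun i => f i = w) with hE
    rcases Finset.eq_empty_or_nonempty E with h | hEne
    · rw [h]; simp
    · set i0 := E.min' hEne with hi0
      have hi0E := E.min'_mem hEne
      have hjump : ∀ i : ℕ, i ∈ E → A ≤ H w ((i : ℤ) + m) - H w i := by
        intro i hi
        have : f i = w := (Finset.mem_filter.1 hi).2
        rw [← this]
        exact hfA i
      have hsub : E ⊆ Finset.Icc i0 (i0 + b) ∪ Finset.Icc (i0 + n - b) (i0 + n) := by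
        intro i hiE
        have hile : i0 ≤ i := E.min'_le i hiE
        have hin : i < n := Finset.mem_range.1 (Finset.mem_filter.1 hiE).1
        set d : ℕ := i - i0 with hd
        have hdn : d < n := by omega
        rcases le_or_gt d m with hdm | hdm
        · -- direct application
          have harc := arc (H w) m (lip w hw) (hper2 w hw) A (i0 : ℤ) d hdm
            (hjump i0 hi0E)
            (by
              rw [show ((i0 : ℤ) + d) = (i : ℤ) by omega]
              exact hjump i hiE)
          have : (d : ℝ) ≤ b := le_trans harc hb
          have : d ≤ b := by exact_mod_cast this
          apply Finset.mem_union_left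
          rw [Finset.mem_Icc]
          omega
        · -- wrap around
          have hd' : n - d ≤ m := by omega
          have harc := arc (H w) m (lip w hw) (hper2 w hw) A (i : ℤ) (n - d) hd'
            (hjump i hiE)
            (by
              rw [show ((i : ℤ) + (n - d : ℕ)) = (i0 : ℤ) + n by omega]
              rw [show ((i0 : ℤ) + n + m) = ((i0 : ℤ) + m) + n by ring, per w hw,
                per w hw]
              exact hjump i0 hi0E)
          have : ((n - d : ℕ) : ℝ) ≤ b := le_trans harc hb
          have : n - d ≤ b := by exact_mod_cast this
          apply Finset.mem_union_right
          rw [Finset.mem_Icc]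
          omega
      calc E.card ≤ (Finset.Icc i0 (i0 + b) ∪ Finset.Icc (i0 + n - b) (i0 + n)).card :=
            Finset.card_le_card hsub
        _ ≤ (Finset.Icc i0 (i0 + b)).card + (Finset.Icc (i0 + n - b) (i0 + n)).card :=
            Finset.card_union_le _ _
        _ ≤ (b + 1) + (b + 1) := by
            rw [Nat.card_Icc, Nat.card_Icc]
            omega
        _ = 2 * b + 2 := by ring
  calc n = (Finset.range n).card := (Finset.card_range n).symm
    _ = ∑ w ∈ Φ, ((Finset.range n).filter (fun i => f i = w)).card := hcard
    _ ≤ ∑ _w ∈ Φ, (2 * b + 2) := Finset.sum_le_sum hfiber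
    _ = Φ.card * (2 * b + 2) := by rw [Finset.sum_const, smul_eq_mul]

lemma antipodal_shift (n : ℕ) (hn : 0 < n) (p : ℝ) : Antipodal n p (p + n / 2) := by
  rw [Antipodal, cdist]
  have hfun : ∀ k : ℤ, |p - (p + n / 2) + k * (n : ℝ)| = |k * (n : ℝ) - n / 2| := by
    intro k; congr 1; ring
  have hbdd : BddBelow (Set.range fun k : ℤ => |p - (p + n / 2) + k * (n : ℝ)|) := by
    refine ⟨0, fun y hy => ?_⟩
    obtain ⟨k, rfl⟩ := hy
    exact abs_nonneg _
  apply le_antisymm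
  · calc (⨅ k : ℤ, |p - (p + n / 2) + k * (n : ℝ)|)
        ≤ |p - (p + n / 2) + ((0 : ℤ) : ℝ) * (n : ℝ)| := ciInf_le hbdd 0
      _ = (n : ℝ) / 2 := by
          push_cast
          rw [show p - (p + (n:ℝ)/2) + 0 * (n:ℝ) = -((n:ℝ)/2) by ring, abs_neg,
            abs_of_nonneg (by positivity)]
  · apply le_ciInf
    intro k
    rw [hfun k]
    rcases le_or_gt k 0 with hk | hk
    · rw [abs_of_nonpos]
      · have : (k : ℝ) * n ≤ 0 := mul_nonpos_of_nonpos_of_nonneg (by exact_mod_cast hk)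
          (by positivity)
        linarith
      · have : (k : ℝ) * n ≤ 0 := mul_nonpos_of_nonpos_of_nonneg (by exact_mod_cast hk)
          (by positivity)
        have hn' : (0 : ℝ) < n := by exact_mod_cast hn
        linarith
    · have hk1 : (1 : ℝ) ≤ k := by exact_mod_cast hk
      have hn' : (0 : ℝ) < n := by exact_mod_cast hn
      rw [abs_of_nonneg]
      · nlinarith
      · nlinarith

lemma rdist_le_dist (G : SimpleGraph (ℤ × ℤ)) (n : ℕ) (hn : 0 < n) (c : ZMod n → ℤ × ℤ)
    (i : ℤ) :
    rdist G n c (i : ℝ) ((i : ℝ) + n / 2) ≤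
      (G.dist (c ((i : ZMod n))) (c (((i + (n / 2 : ℕ) : ℤ)) : ZMod n)) : ℝ) + 1 / 2 := by
  have hfl_p : ⌊(i : ℝ)⌋ = i := Int.floor_intCast i
  have hfr_p : Int.fract (i : ℝ) = 0 := Int.fract_intCast i
  set m : ℕ := n / 2 with hm
  have hmle : (m : ℝ) ≤ (n : ℝ) / 2 := by
    rw [hm]
    have : 2 * (n / 2) ≤ n := by omega
    have h2 : (2 * (n / 2 : ℕ) : ℝ) ≤ (n : ℝ) := by exact_mod_cast this
    push_cast at h2 ⊢
    linarith
  have hmgt : (n : ℝ) / 2 < (m : ℝ) + 1 := by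
    rw [hm]
    have : n < 2 * (n / 2) + 2 := by omega
    have h2 : (n : ℝ) < (2 * (n / 2 : ℕ) + 2 : ℕ) := by exact_mod_cast this
    push_cast at h2 ⊢
    linarith
  have hfl_q : ⌊(i : ℝ) + n / 2⌋ = i + m := by
    rw [Int.floor_eq_iff]
    constructor
    · push_cast; linarith
    · push_cast; linarith
  have hfr_q : Int.fract ((i : ℝ) + n / 2) = (n : ℝ) / 2 - m := by
    rw [Int.fract, hfl_q]; push_cast; ring
  have hfr_q_le : Int.fract ((i : ℝ) + n / 2) ≤ 1 / 2 := by
    rw [hfr_q, hm]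
    have : n ≤ 2 * (n / 2) + 1 := by omega
    have h2 : (n : ℝ) ≤ (2 * (n / 2 : ℕ) + 1 : ℕ) := by exact_mod_cast this
    push_cast at h2 ⊢
    linarith
  rw [rdist]
  simp only [hfl_p, hfl_q, hfr_p, hfr_q]
  apply le_trans (min_le_left _ _)
  apply le_trans (min_le_left _ _)
  apply le_trans (min_le_left _ _)
  rw [hfr_q] at hfr_q_le
  linarith [hfr_q_le]


lemma dotR_neg (w y : ℝ × ℝ) : dotR w (-y) = -dotR w y := by
  simp only [dotR, Prod.fst_neg, Prod.snd_neg]; ring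

/-- Theorem `cayzz`.  For every finite generating set `S` of `ℤ²`, the
Cayley graph `Cay(ℤ², S)` is strongly shortcut; that is, there exist `θ ∈ ℕ` and `ξ ∈ (0,1)`
such that every `ξ`-almost isometric cycle of `Cay(ℤ², S)` has length at most `θ`. -/

theorem thm_cayzz (S : Finset (ℤ × ℤ)) (hgen : AddSubgroup.closure (S : Set (ℤ × ℤ)) = ⊤) :
    StronglyShortcut (z2Cayley S) := by
  classical
  obtain ⟨C, hC⟩ : ∃ C : ℕ, C = (Phi S).card := ⟨_, rfl⟩
  obtain ⟨K, hK⟩ : ∃ K : ℕ, K = Kbnd S := ⟨_, rfl⟩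
  obtain ⟨ξ, hξ⟩ : ∃ ξ : ℝ, ξ = 1 - 1 / (4 * ((C : ℝ) + 1)) := ⟨_, rfl⟩
  have hC0 : (0 : ℝ) ≤ (C : ℝ) := Nat.cast_nonneg C
  have hK0 : (0 : ℝ) ≤ (K : ℝ) := Nat.cast_nonneg K
  have hCpos : (0 : ℝ) < 4 * ((C : ℝ) + 1) := by positivity
  have hfrac : 1 / (4 * ((C : ℝ) + 1)) ≤ 1 / 4 := by
    apply one_div_le_one_div_of_le (by norm_num)
    linarith
  have hfracpos : 0 < 1 / (4 * ((C : ℝ) + 1)) := by positivity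
  refine ⟨8 * C * (K + 3) + 8, ξ, by rw [hξ]; linarith, by rw [hξ]; linarith, ?_⟩
  intro n c hn hcyc halm
  obtain ⟨A, hA⟩ : ∃ A : ℝ, A = ξ * ((n : ℝ) / 2) - 1 / 2 - (K : ℝ) := ⟨_, rfl⟩
  obtain ⟨H, hH⟩ : ∃ H : ℝ × ℝ → ℤ → ℝ,
      H = fun w x => dotR w (eR (c ((x : ℤ) : ZMod n))) := ⟨_, rfl⟩
  have hn0 : (0 : ℝ) ≤ (n : ℝ) := Nat.cast_nonneg n
  have lip : ∀ w ∈ Phi S, ∀ x : ℤ, |H w (x + 1) - H w x| ≤ 1 := by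
    intro w hw x
    have hadj := hcyc ((x : ℤ) : ZMod n)
    have hstep : c (((x : ℤ) : ZMod n) + 1) - c ((x : ℤ) : ZMod n) ∈ Tset S :=
      step_mem_Tset hadj
    have hcast : (((x + 1 : ℤ)) : ZMod n) = ((x : ℤ) : ZMod n) + 1 := by push_cast; ring
    have hdiff : H w (x + 1) - H w x
        = dotR w (eR (c (((x : ℤ) : ZMod n) + 1) - c ((x : ℤ) : ZMod n))) := by
      simp only [hH, hcast, eR_sub, dotR_sub]
    rw [hdiff, abs_le]
    constructor
    · have hneg := Phi_feasible hw _ (neg_mem_Tset hstep)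
      rw [eR_neg, dotR_neg] at hneg
      linarith
    · exact Phi_feasible hw _ hstep
  have per : ∀ w ∈ Phi S, ∀ x : ℤ, H w (x + n) = H w x := by
    intro w hw x
    have hxn : ((x + (n : ℤ)) : ZMod n) = ((x : ℤ) : ZMod n) := by
      push_cast
      simp
    simp only [hH]
    rw [show ((x + (n : ℕ) : ℤ) : ZMod n) = ((x + (n : ℤ)) : ZMod n) by norm_cast, hxn]
  have hyp : ∀ i : ℤ, ∃ w ∈ Phi S, A ≤ H w (i + ((n / 2 : ℕ) : ℤ)) - H w i := by
    intro i
    have hanti := antipodal_shift n hn (i : ℝ)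
    have h1 := halm (i : ℝ) ((i : ℝ) + n / 2) hanti
    have h2 := rdist_le_dist (z2Cayley S) n hn c i
    have hd : ξ * ((n : ℝ) / 2) - 1 / 2
        ≤ ((z2Cayley S).dist (c ((i : ℤ) : ZMod n))
            (c (((i + ((n / 2 : ℕ) : ℤ) : ℤ)) : ZMod n)) : ℝ) := by
      linarith
    set v : ℤ × ℤ := c (((i + ((n / 2 : ℕ) : ℤ) : ℤ)) : ZMod n) - c ((i : ℤ) : ZMod n) with hv
    obtain ⟨w, hw, hP2⟩ := P2 S hgen v
    refine ⟨w, hw, ?_⟩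
    have htrans : (z2Cayley S).dist (c ((i : ℤ) : ZMod n))
        (c (((i + ((n / 2 : ℕ) : ℤ) : ℤ)) : ZMod n)) = (z2Cayley S).dist 0 v := by
      rw [hv]; exact dist_eq_dist_zero_sub hgen _ _
    have hdot : H w (i + ((n / 2 : ℕ) : ℤ)) - H w i = dotR w (eR v) := by
      simp only [hH, hv, eR_sub, dotR_sub]
    rw [hdot, hA]
    rw [htrans] at hd
    rw [← hK] at hP2
    linarith
  obtain ⟨b, hb⟩ : ∃ b : ℕ, b = (⌈(((n / 2 : ℕ) : ℝ)) - A + 1 / 2⌉).toNat := ⟨_, rfl⟩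
  have hble : ((((n / 2 : ℕ) : ℝ)) - A + 1 / 2) ≤ (b : ℝ) := by
    calc ((((n / 2 : ℕ) : ℝ)) - A + 1 / 2)
        ≤ (⌈(((n / 2 : ℕ) : ℝ)) - A + 1 / 2⌉ : ℝ) := Int.le_ceil _
      _ ≤ ((⌈(((n / 2 : ℕ) : ℝ)) - A + 1 / 2⌉.toNat : ℤ) : ℝ) := by
          exact_mod_cast Int.self_le_toNat _
      _ = (b : ℝ) := by rw [hb]; push_cast; ring
  have hcover := cover (Phi S) n H A lip per hyp b hble
  -- numerics
  have hmle : (((n / 2 : ℕ) : ℝ)) ≤ (n : ℝ) / 2 := by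
    have h2 : (2 * (n / 2) : ℕ) ≤ n := by omega
    have h2' : ((2 * (n / 2) : ℕ) : ℝ) ≤ (n : ℝ) := by exact_mod_cast h2
    push_cast at h2'
    linarith
  have hmge : (n : ℝ) ≤ 2 * (((n / 2 : ℕ) : ℝ)) + 1 := by
    have h2 : n ≤ 2 * (n / 2) + 1 := by omega
    have h2' : (n : ℝ) ≤ ((2 * (n / 2) + 1 : ℕ) : ℝ) := by exact_mod_cast h2
    push_cast at h2'
    linarith
  have hξ1 : ξ ≤ 1 := by rw [hξ]; linarith
  have hApos : 0 ≤ (((n / 2 : ℕ) : ℝ)) - A + 1 / 2 := by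
    rw [hA]
    linarith [mul_nonneg (sub_nonneg.2 hξ1) hn0, hmge, hK0]
  have hbub : (b : ℝ) ≤ (((n / 2 : ℕ) : ℝ)) - A + 3 / 2 := by
    have h0 : 0 ≤ ⌈(((n / 2 : ℕ) : ℝ)) - A + 1 / 2⌉ := Int.ceil_nonneg hApos
    have h1 : (⌈(((n / 2 : ℕ) : ℝ)) - A + 1 / 2⌉ : ℝ)
        < ((((n / 2 : ℕ) : ℝ)) - A + 1 / 2) + 1 := Int.ceil_lt_add_one _
    have h2 : ((b : ℕ) : ℝ) = (⌈(((n / 2 : ℕ) : ℝ)) - A + 1 / 2⌉ : ℝ) := by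
      rw [hb]
      exact_mod_cast congrArg (fun z : ℤ => (z : ℝ)) (Int.toNat_of_nonneg h0)
    rw [h2]
    linarith
  have hnle : (n : ℝ) ≤ (C : ℝ) * (2 * (b : ℝ) + 2) := by
    have h2 : ((n : ℕ) : ℝ) ≤ (((Phi S).card * (2 * b + 2) : ℕ) : ℝ) := by exact_mod_cast hcover
    push_cast at h2
    rw [← hC] at h2
    linarith
  have hCf : (C : ℝ) * (1 - ξ) ≤ 1 / 4 := by
    have h1ξ : 1 - ξ = 1 / (4 * ((C : ℝ) + 1)) := by rw [hξ]; ring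
    rw [h1ξ, mul_one_div, div_le_div_iff₀ hCpos (by norm_num : (0 : ℝ) < 4)]
    linarith
  have emul : ((C : ℝ) * (1 - ξ)) * (n : ℝ) ≤ 1 / 4 * (n : ℝ) :=
    mul_le_mul_of_nonneg_right hCf (Nat.cast_nonneg n)
  have e2 : (((n / 2 : ℕ) : ℝ)) - A ≤ (1 - ξ) * (n : ℝ) / 2 + 1 / 2 + (K : ℝ) := by
    rw [hA]; linarith [hmle]
  have e3 : (C : ℝ) * (2 * (b : ℝ) + 2) ≤ (C : ℝ) * ((1 - ξ) * (n : ℝ) + 2 * (K : ℝ) + 6) := by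
    apply mul_le_mul_of_nonneg_left _ hC0
    linarith [hbub, e2]
  have e5 : (C : ℝ) * ((1 - ξ) * (n : ℝ) + 2 * (K : ℝ) + 6)
      = ((C : ℝ) * (1 - ξ)) * (n : ℝ) + (C : ℝ) * (2 * (K : ℝ) + 6) := by ring
  have hfin : (n : ℝ) ≤ 1 / 4 * (n : ℝ) + (C : ℝ) * (2 * (K : ℝ) + 6) := by
    have hchain : (n : ℝ) ≤ ((C : ℝ) * (1 - ξ)) * (n : ℝ) + (C : ℝ) * (2 * (K : ℝ) + 6) := by
      calc (n : ℝ) ≤ (C : ℝ) * (2 * (b : ℝ) + 2) := hnle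
        _ ≤ (C : ℝ) * ((1 - ξ) * (n : ℝ) + 2 * (K : ℝ) + 6) := e3
        _ = _ := e5
    linarith
  have hgoal : (n : ℝ) ≤ ((8 * C * (K + 3) + 8 : ℕ) : ℝ) := by
    push_cast
    linarith [hfin, mul_nonneg hC0 hK0, hC0]
  exact_mod_cast hgoal

end ShortcutGraphs
end
end

section
/- Let k ≥ 1 and 0 ≤ z_max ≤ k be integers, let m ≥ 0, and suppose that ∑_{z = −m}^{z_max} α_z·2^z = 2^k + ε in ℚ, where each α_z ∈ ℤ and ε ∈ {+1, −1}. Then: if z_max = 0 then ∑_z |α_z| ≥ 2^{k − z_max} − 1; if z_max = 1 then ∑_z |α_z| ≥ 2^{k − z_max}; and if z_max ≥ 2 then ∑_z |α_z| ≥ 2^{k − z_max} + 1. -/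
/-- Lemma `powtsum`.  Let `k ≥ 1` and `0 ≤ z_max ≤ k` be integers, let
`m ≥ 0`, and suppose that `∑_{z = −m}^{z_max} α_z·2^z = 2^k + ε` in `ℚ`, where each
`α_z ∈ ℤ` and `ε ∈ {+1, −1}`.  Then: if `z_max = 0` then `∑_z |α_z| ≥ 2^(k − z_max) − 1`;
if `z_max = 1` then `∑_z |α_z| ≥ 2^(k − z_max)`; and if `z_max ≥ 2` then
`∑_z |α_z| ≥ 2^(k − z_max) + 1`. -/
theorem lem_powtsum (k : ℕ) (hk : 1 ≤ k) (zmax : ℕ) (hzk : zmax ≤ k) (m : ℕ)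
    (α : ℤ → ℤ) (ε : ℤ) (hε : ε = 1 ∨ ε = -1)
    (hsum : ∑ z ∈ Finset.Icc (-(m : ℤ)) (zmax : ℤ), (α z : ℚ) * 2 ^ z
      = 2 ^ k + (ε : ℚ)) :
    (zmax = 0 → 2 ^ (k - zmax) - 1 ≤ ∑ z ∈ Finset.Icc (-(m : ℤ)) (zmax : ℤ), |α z|) ∧
    (zmax = 1 → (2 : ℤ) ^ (k - zmax) ≤ ∑ z ∈ Finset.Icc (-(m : ℤ)) (zmax : ℤ), |α z|) ∧
    (2 ≤ zmax → 2 ^ (k - zmax) + 1 ≤ ∑ z ∈ Finset.Icc (-(m : ℤ)) (zmax : ℤ), |α z|) := by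
  set I := Finset.Icc (-(m : ℤ)) (zmax : ℤ) with hI
  set S := ∑ z ∈ I, |α z| with hSdef
  have hSnn : 0 ≤ S := Finset.sum_nonneg fun z _ => abs_nonneg _
  have hmem : (zmax : ℤ) ∈ I := Finset.mem_Icc.mpr ⟨by omega, le_refl _⟩
  -- main coarse bound
  have habs : |∑ z ∈ I, (α z : ℚ) * 2 ^ z| ≤ (S : ℚ) * 2 ^ zmax := by
    refine (Finset.abs_sum_le_sum_abs _ _).trans ?_
    have hb : ∀ z ∈ I, |(α z : ℚ) * 2 ^ z| ≤ (|α z| : ℚ) * 2 ^ zmax := by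
      intro z hz
      rw [abs_mul, show |(2:ℚ) ^ z| = 2 ^ z from abs_of_pos (zpow_pos two_pos z),
        ← Int.cast_abs, ← zpow_natCast (2 : ℚ) zmax]
      exact mul_le_mul_of_nonneg_left
        (zpow_le_zpow_right₀ one_le_two (Finset.mem_Icc.mp hz).2)
        (by positivity)
    refine (Finset.sum_le_sum hb).trans_eq ?_
    rw [← Finset.sum_mul, hSdef]
    push_cast
    ring
  have key : (2 : ℤ) ^ k + ε ≤ S * 2 ^ zmax := by
    have h1 : ((2 : ℚ) ^ k + (ε : ℚ)) ≤ (S : ℚ) * 2 ^ zmax := by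
      refine le_trans ?_ habs
      rw [hsum]
      have h2k : (1 : ℚ) ≤ 2 ^ k := one_le_pow₀ one_le_two
      rcases hε with h | h <;> subst h <;> push_cast <;>
        rw [abs_of_nonneg (by linarith)]
    exact_mod_cast h1
  have hεb : ε = 1 ∨ ε = -1 := hε
  refine ⟨?_, ?_, ?_⟩
  · intro h0
    subst h0
    simp only [pow_zero, mul_one, Nat.sub_zero] at key ⊢
    omega
  · intro h1
    subst h1
    have h2k : (2 : ℤ) ^ k = 2 * 2 ^ (k - 1) := by
      rw [← pow_succ']; congr 1; omega
    rw [pow_one] at key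
    omega
  · intro h2
    rcases hεb with hε1 | hε1
    · -- ε = 1 : easy from coarse bound
      subst hε1
      by_contra hcon
      push_neg at hcon
      have hS : S ≤ 2 ^ (k - zmax) := by omega
      have hpk : (2 : ℤ) ^ k = 2 ^ (k - zmax) * 2 ^ zmax := by
        rw [← pow_add]; congr 1; omega
      nlinarith [pow_pos (show (0:ℤ) < 2 by norm_num) zmax]
    · subst hε1
      by_contra hcon
      push_neg at hcon
      have hS : S ≤ 2 ^ (k - zmax) := by omega
      set P : ℤ := 2 ^ (k - zmax) with hP
      set a : ℤ := |α (zmax : ℤ)| with ha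
      set I' := I.erase (zmax : ℤ) with hI'
      have hsplit : S = a + ∑ z ∈ I', |α z| := (Finset.add_sum_erase I _ hmem).symm
      set S' := ∑ z ∈ I', |α z| with hS'
      have hS'nn : 0 ≤ S' := Finset.sum_nonneg fun z _ => abs_nonneg _
      -- refined bound on the erased sum
      have habs2 : |∑ z ∈ I', (α z : ℚ) * 2 ^ z| ≤ (S' : ℚ) * 2 ^ (zmax - 1) := by
        refine (Finset.abs_sum_le_sum_abs _ _).trans ?_
        have hb : ∀ z ∈ I', |(α z : ℚ) * 2 ^ z| ≤ (|α z| : ℚ) * 2 ^ (zmax - 1) := by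
          intro z hz
          rw [abs_mul, show |(2:ℚ) ^ z| = 2 ^ z from abs_of_pos (zpow_pos two_pos z),
            ← Int.cast_abs, ← zpow_natCast (2 : ℚ) (zmax - 1)]
          have hzle : z ≤ ((zmax - 1 : ℕ) : ℤ) := by
            have h1 := (Finset.mem_Icc.mp (Finset.mem_of_mem_erase hz)).2
            have h2' := Finset.ne_of_mem_erase hz
            omega
          exact mul_le_mul_of_nonneg_left (zpow_le_zpow_right₀ one_le_two hzle)
            (by positivity)
        refine (Finset.sum_le_sum hb).trans_eq ?_
        rw [← Finset.sum_mul, hS']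
        push_cast
        ring
      have hsum' : (α (zmax : ℤ) : ℚ) * 2 ^ ((zmax : ℤ)) + ∑ z ∈ I', (α z : ℚ) * 2 ^ z
          = 2 ^ k - 1 := by
        rw [Finset.add_sum_erase I (fun z => (α z : ℚ) * 2 ^ z) hmem, hsum]
        push_cast
        ring
      have key2 : (2 : ℤ) ^ k - 1 ≤ a * 2 ^ zmax + S' * 2 ^ (zmax - 1) := by
        have h1 : ((2 : ℚ) ^ k - 1) ≤ (a : ℚ) * 2 ^ zmax + (S' : ℚ) * 2 ^ (zmax - 1) := by
          calc ((2 : ℚ) ^ k - 1)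
              = (α (zmax : ℤ) : ℚ) * 2 ^ ((zmax : ℤ)) + ∑ z ∈ I', (α z : ℚ) * 2 ^ z :=
                hsum'.symm
            _ ≤ |(α (zmax : ℤ) : ℚ) * 2 ^ ((zmax : ℤ))| + |∑ z ∈ I', (α z : ℚ) * 2 ^ z| := by
                gcongr <;> exact le_abs_self _
            _ ≤ (a : ℚ) * 2 ^ zmax + (S' : ℚ) * 2 ^ (zmax - 1) := by
                gcongr
                rw [abs_mul, show |(2:ℚ) ^ ((zmax:ℤ))| = 2 ^ ((zmax:ℤ)) from
                  abs_of_pos (zpow_pos two_pos _), ha, ← zpow_natCast (2 : ℚ) zmax]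
                push_cast [Int.cast_abs]
                exact le_refl _
        exact_mod_cast h1
      -- arithmetic: a = P and S' = 0
      have hpk : (2 : ℤ) ^ k = P * 2 ^ zmax := by
        rw [hP, ← pow_add]; congr 1; omega
      have hq2 : (2 : ℤ) ^ zmax = 2 * 2 ^ (zmax - 1) := by
        rw [← pow_succ']; congr 1; omega
      have hQ2 : (2 : ℤ) ^ (zmax - 1) ≥ 2 := by
        calc (2:ℤ) ^ (zmax - 1) ≥ 2 ^ 1 := pow_le_pow_right₀ (by norm_num) (by omega)
          _ = 2 := pow_one 2
      have haP : a ≥ P := by nlinarith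
      have hS'0 : S' = 0 := by nlinarith [abs_nonneg (α (zmax : ℤ))]
      have haP' : a = P := by omega
      -- all other coefficients vanish
      have hz0 : ∀ z ∈ I', α z = 0 := by
        intro z hz
        have h0 : |α z| = 0 := (Finset.sum_eq_zero_iff_of_nonneg
          (fun z _ => abs_nonneg (α z))).mp hS'0 z hz
        exact abs_eq_zero.mp h0
      have hsum0 : ∑ z ∈ I', (α z : ℚ) * 2 ^ z = 0 :=
        Finset.sum_eq_zero fun z hz => by rw [hz0 z hz]; simp
      rw [hsum0, add_zero] at hsum'
      have hZ : α (zmax : ℤ) * 2 ^ zmax = 2 ^ k - 1 := by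
        have h3 : ((α (zmax : ℤ) * 2 ^ zmax : ℤ) : ℚ) = ((2 ^ k - 1 : ℤ) : ℚ) := by
          push_cast
          rw [← zpow_natCast (2 : ℚ) zmax]
          exact hsum'
        exact_mod_cast h3
      have habsZ : |α (zmax : ℤ) * 2 ^ zmax| = 2 ^ k := by
        rw [abs_mul, ← ha, haP', abs_of_nonneg
          (pow_nonneg (by norm_num : (0:ℤ) ≤ 2) zmax), ← hpk]
      rw [hZ] at habsZ
      have h2k1 : (1 : ℤ) ≤ 2 ^ k := one_le_pow₀ (by norm_num)
      rw [abs_of_nonneg (by linarith)] at habsZ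
      linarith
end
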